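/- Let M be a finite matroid of rank r that has two nontrivial connected flats X and X′ satisfying (1) X ∩ X′ ≠ ∅, (2) r(X ∪ X′) = r, and (3) X ∪ X′ is a proper subset of the ground set E(M). Then M is not a lattice path matroid, i.e., M is not isomorphic to M[N] for any lattice path presentation N. -/

import Mathlib

open Set
open scoped Matroid

namespace LPM

variable {α β : Type*}

/-- `I` is a partial transversal of the set family `N`: there is an injection
matching each element of `I` to an index of a member of the family containing it. -/
def IsPT {ι : Type*} (N : ι → Set α) (I : Set α) : Prop :=
  ∃ f : I → ι, Function.Injective f ∧ ∀ x : I, (x : α) ∈ N (f x)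

/-- `I` is a (full) transversal of the set family `N`: there is a bijection
matching each element of `I` to an index of a member of the family containing it. -/
def IsT {ι : Type*} (N : ι → Set α) (I : Set α) : Prop :=
  ∃ f : I → ι, Function.Bijective f ∧ ∀ x : I, (x : α) ∈ N (f x)

/-- A lattice path presentation with nullity `m` and rank `r`: a sequence of
intervals `[l i, g i] ⊆ {1, …, m + r}` whose left endpoints strictly increase
and whose right endpoints strictly increase. -/
structure LPP (m r : ℕ) where
  l : Fin r → ℕ
  g : Fin r → ℕ
  l_strictMono : StrictMono l
  g_strictMono : StrictMono g
  one_le_l : ∀ i, 1 ≤ l i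
  l_le_g : ∀ i, l i ≤ g i
  g_le : ∀ i, g i ≤ m + r

/-- The intervals of a lattice path presentation. -/
def LPP.N {m r : ℕ} (P : LPP m r) (i : Fin r) : Set ℕ := Set.Icc (P.l i) (P.g i)

/-- `M` is the lattice path matroid `M[N]` of the presentation `P`: the ground set
is `{1, …, m + r}` and the independent sets are exactly the partial transversals
of the intervals of `P`. -/
def IsLPMOf {m r : ℕ} (P : LPP m r) (M : Matroid ℕ) : Prop :=
  M.E = Set.Icc 1 (m + r) ∧
    ∀ I : Set ℕ, M.Indep I ↔ I ⊆ Set.Icc 1 (m + r) ∧ IsPT P.N I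

/-- `M` is isomorphic to `M'`: there is a bijection between the ground sets
carrying independent sets to independent sets in both directions. -/
def IsoTo (M : Matroid α) (M' : Matroid β) : Prop :=
  ∃ f : α → β, Set.BijOn f M.E M'.E ∧ ∀ I ⊆ M.E, (M.Indep I ↔ M'.Indep (f '' I))

/-- A lattice path matroid: a matroid isomorphic to `M[N]` for some lattice path
presentation (presentations with `r = 0` give the rank-zero matroids). -/
def IsLPMatroid (M : Matroid α) : Prop :=
  ∃ (m r : ℕ) (P : LPP m r) (M₀ : Matroid ℕ), IsLPMOf P M₀ ∧ IsoTo M M₀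

/-- A circuit of a matroid: a minimal dependent subset of the ground set. -/
def Circuit (M : Matroid α) (C : Set α) : Prop :=
  C ⊆ M.E ∧ ¬ M.Indep C ∧ ∀ D : Set α, D ⊂ C → M.Indep D

/-- A matroid is connected if every two distinct elements of the ground set lie
in a common circuit. -/
def Connected (M : Matroid α) : Prop :=
  ∀ x ∈ M.E, ∀ y ∈ M.E, x ≠ y → ∃ C, Circuit M C ∧ x ∈ C ∧ y ∈ C

/-- The rank of a set in a matroid: the supremum of the cardinalities of its
independent subsets. -/
noncomputable def rk (M : Matroid α) (X : Set α) : ℕ :=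
  sSup {n | ∃ I, I ⊆ X ∧ M.Indep I ∧ I.ncard = n}

/-- A nontrivial connected flat: a flat that is dependent and whose restriction
is a connected matroid. -/
def NTConnFlat (M : Matroid α) (X : Set α) : Prop :=
  M.IsFlat X ∧ ¬ M.Indep X ∧ Connected (M ↾ X)

/-- Deletion of a set from a matroid. -/
def delete (M : Matroid α) (D : Set α) : Matroid α := M ↾ (M.E \ D)

/-- Contraction of a set in a matroid, defined via duality. -/
def contract (M : Matroid α) (C : Set α) : Matroid α := (delete M✶ C)✶

/-- `Minor M' M` means that `M'` is obtained from `M` by a sequence of deletions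
and contractions. -/
inductive Minor : Matroid α → Matroid α → Prop
  | refl (M : Matroid α) : Minor M M
  | del {M' M : Matroid α} (D : Set α) (h : Minor M' M) : Minor (delete M' D) M
  | con {M' M : Matroid α} (C : Set α) (h : Minor M' M) : Minor (contract M' C) M

end LPM

/-!
In `M[N]` every independent set has an order-preserving matching into the intervals, since two
crossed pairs can always be uncrossed. A nontrivial connected flat `G` is therefore an interval
of `{1, …, m + r}`: if `w ∉ G` lay between two elements of `G`, a circuit `C ⊆ G` around `w`
could be matched. Indeed, with `z` the next element of `C` after `w`, the set `C - z + w` is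
independent since `G` is a flat; in a matching of it, either the interval of `w` contains `z`
and can be handed to `z`, or it ends before `z`, and the part below `w` glues to a matching of
`C` minus an element below `w`. Hence `X ∪ X'` is an
interval, and an element `e ∉ X ∪ X'` is separated from it by an endpoint `b`, which lies in a
circuit `C` inside `X` or `X'`. That flat avoids `e`, so `C - b + e` is independent, and the
interval matched to `e` must miss `b`, or handing it to `b` would match `C`. But `X ∪ X'` spans,
so it meets that interval on the far side of `b`, forcing `b` into it.
-/

theorem Set.OrdConnected.union_of_inter_nonempty {α : Type*} [LinearOrder α] {s t : Set α}
    (hs : s.OrdConnected) (ht : t.OrdConnected) (hst : (s ∩ t).Nonempty) :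
    (s ∪ t).OrdConnected := by
  obtain ⟨p, hps, hpt⟩ := hst
  have key : ∀ {u v : Set α}, u.OrdConnected → v.OrdConnected → p ∈ u → p ∈ v →
      ∀ x ∈ u, ∀ y ∈ v, Icc x y ⊆ u ∪ v := by
    intro u v hu hv hpu hpv x hx y hy z hz
    rcases le_total z p with hzp | hpz
    · exact Or.inl (hu.out hx hpu ⟨hz.1, hzp⟩)
    · exact Or.inr (hv.out hpv hy ⟨hpz, hz.2⟩)
  refine ⟨?_⟩
  rintro x (hx | hx) y (hy | hy)
  · exact (hs.out hx hy).trans subset_union_left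
  · exact key hs ht hps hpt x hx y hy
  · exact (key ht hs hpt hps x hx y hy).trans (union_comm t s).subset
  · exact (ht.out hx hy).trans subset_union_right

theorem Set.OrdConnected.exists_forall_mem_uIcc {α : Type*} [LinearOrder α] {s : Set α}
    (hs : s.OrdConnected) (hfin : s.Finite) (hne : s.Nonempty) {e : α} (he : e ∉ s) :
    ∃ c ∈ s, ∀ u ∈ s, c ∈ uIcc e u := by
  obtain ⟨a, has, hamin⟩ := exists_min_image s id hfin hne
  obtain ⟨b, hbs, hbmax⟩ := exists_max_image s id hfin hne
  by_cases hea : e < a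
  · exact ⟨a, has, fun u hu => Icc_subset_uIcc ⟨hea.le, hamin u hu⟩⟩
  · have hbe : b < e := lt_of_not_ge fun heb => he (hs.out has hbs ⟨not_lt.mp hea, heb⟩)
    exact ⟨b, hbs, fun u hu => Icc_subset_uIcc' ⟨hbmax u hu, hbe.le⟩⟩

namespace Matroid

variable {α β : Type*} {M : Matroid α} {f : α → β}

theorem IsFlat.map {X : Set α} (hX : M.IsFlat X) (hf : InjOn f M.E) :
    (M.map f hf).IsFlat (f '' X) := by
  rw [isFlat_iff_closure_eq, map_closure_eq, ← M.closure_inter_ground,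
    hf.preimage_image_inter hX.subset_ground, hX.closure]

theorem IsCircuit.map {C : Set α} (hC : M.IsCircuit C) (hf : InjOn f M.E) :
    (M.map f hf).IsCircuit (f '' C) := by
  refine isCircuit_iff_forall_ssubset.mpr
    ⟨map_dep_iff.mpr ⟨C, hC.dep, rfl⟩, fun J hJ => ?_⟩
  obtain ⟨I, hIC, rfl⟩ := subset_image_iff.mp hJ.subset
  exact (hC.ssubset_indep (hIC.ssubset_of_ne (by rintro rfl; exact hJ.ne rfl))).map f hf

end Matroid

namespace LPM

variable {α β : Type*}

section Matroid

variable {M : Matroid α}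

theorem circuit_iff_isCircuit {C : Set α} : Circuit M C ↔ M.IsCircuit C := by
  rw [Matroid.isCircuit_iff_forall_ssubset, Matroid.Dep]
  exact ⟨fun ⟨hCE, hC, hmin⟩ => ⟨⟨hC, hCE⟩, fun D hD => hmin D hD⟩,
    fun ⟨⟨hC, hCE⟩, hmin⟩ => ⟨hCE, hC, fun D hD => hmin hD⟩⟩

theorem connected_restrict_iff {X : Set α} (hX : X ⊆ M.E) :
    Connected (M ↾ X) ↔
      ∀ x ∈ X, ∀ y ∈ X, x ≠ y → ∃ C, M.IsCircuit C ∧ C ⊆ X ∧ x ∈ C ∧ y ∈ C := by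
  simp only [Connected, circuit_iff_isCircuit, Matroid.restrict_isCircuit_iff hX,
    Matroid.restrict_ground_eq, and_assoc]

theorem NTConnFlat.exists_isCircuit_of_mem {G : Set α} (hG : NTConnFlat M G) {p q : α}
    (hp : p ∈ G) (hq : q ∈ G) : ∃ C, M.IsCircuit C ∧ C ⊆ G ∧ p ∈ C ∧ q ∈ C := by
  obtain ⟨hflat, hdep, hconn⟩ := hG
  rw [connected_restrict_iff hflat.subset_ground] at hconn
  rcases eq_or_ne p q with rfl | hpq
  · obtain ⟨C, hCG, hC⟩ := (show M.Dep G from ⟨hdep, hflat.subset_ground⟩).exists_isCircuit_subset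
    obtain ⟨c, hc⟩ := hC.nonempty
    by_cases hcp : c = p
    · exact ⟨C, hC, hCG, hcp ▸ hc, hcp ▸ hc⟩
    · obtain ⟨D, hD, hDG, hpD, -⟩ := hconn p hp c (hCG hc) (Ne.symm hcp)
      exact ⟨D, hD, hDG, hpD, hpD⟩
  · exact hconn p hp q hq hpq

theorem exists_indep_ncard_eq_rk {k : ℕ} (hk : ∀ I, M.Indep I → I.ncard ≤ k) (X : Set α) :
    ∃ I ⊆ X, M.Indep I ∧ I.ncard = rk M X :=
  Nat.sSup_mem (s := {n | ∃ I, I ⊆ X ∧ M.Indep I ∧ I.ncard = n})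
    ⟨0, ∅, empty_subset X, M.empty_indep, ncard_empty α⟩
    ⟨k, by rintro _ ⟨I, -, hI, rfl⟩; exact hk I hI⟩

theorem ncard_le_rk {k : ℕ} (hk : ∀ I, M.Indep I → I.ncard ≤ k) {I X : Set α} (hIX : I ⊆ X)
    (hI : M.Indep I) : I.ncard ≤ rk M X :=
  le_csSup ⟨k, by rintro _ ⟨J, -, hJ, rfl⟩; exact hk J hJ⟩ ⟨I, hIX, hI, rfl⟩

variable {f : α → β}

theorem IsoTo.exists_eq_map {M₀ : Matroid β} (h : IsoTo M M₀) :
    ∃ (f : α → β) (hf : InjOn f M.E), M₀ = M.map f hf := by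
  obtain ⟨f, hbij, hindep⟩ := h
  refine ⟨f, hbij.injOn, Matroid.ext_indep (by rw [Matroid.map_ground, hbij.image_eq]) ?_⟩
  intro J hJ
  obtain ⟨I, hIE, rfl⟩ := subset_image_iff.mp (hbij.image_eq ▸ hJ)
  rw [Matroid.map_image_indep_iff hIE, hindep I hIE]

theorem NTConnFlat.map {X : Set α} (hX : NTConnFlat M X) (hf : InjOn f M.E) :
    NTConnFlat (M.map f hf) (f '' X) := by
  obtain ⟨hflat, hdep, hconn⟩ := hX
  have hXE := hflat.subset_ground
  refine ⟨hflat.map hf, by rwa [Matroid.map_image_indep_iff hXE], ?_⟩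
  rw [connected_restrict_iff hXE] at hconn
  rw [connected_restrict_iff (image_mono hXE)]
  rintro _ ⟨x, hx, rfl⟩ _ ⟨y, hy, rfl⟩ hxy
  obtain ⟨C, hC, hCX, hxC, hyC⟩ := hconn x hx y hy (fun h => hxy (congrArg f h))
  exact ⟨f '' C, hC.map hf, image_mono hCX, mem_image_of_mem f hxC,
    mem_image_of_mem f hyC⟩

theorem rk_map_image (hf : InjOn f M.E) {X : Set α} (hX : X ⊆ M.E) :
    rk (M.map f hf) (f '' X) = rk M X := by
  unfold rk
  congr 1
  ext n
  constructor
  · rintro ⟨J, hJX, hJ, rfl⟩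
    obtain ⟨I, hIX, rfl⟩ := subset_image_iff.mp hJX
    exact ⟨I, hIX, (Matroid.map_image_indep_iff (hIX.trans hX)).mp hJ,
      ((hf.mono (hIX.trans hX)).ncard_image).symm⟩
  · rintro ⟨I, hIX, hI, rfl⟩
    exact ⟨f '' I, image_mono hIX, hI.map f hf, (hf.mono (hIX.trans hX)).ncard_image⟩

end Matroid

namespace LPP

variable {m r : ℕ} (P : LPP m r)

def IsMonoMatching (J : Set ℕ) (φ : ℕ → Fin r) : Prop :=
  StrictMonoOn φ J ∧ ∀ x ∈ J, x ∈ P.N (φ x)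

variable {P}

@[simp]
theorem mem_N {x : ℕ} {i : Fin r} : x ∈ P.N i ↔ P.l i ≤ x ∧ x ≤ P.g i :=
  Iff.rfl

theorem mem_N_swap {x y : ℕ} {i j : Fin r} (hxy : x ≤ y) (hji : j ≤ i) (hx : x ∈ P.N i)
    (hy : y ∈ P.N j) : x ∈ P.N j ∧ y ∈ P.N i := by
  have hl := P.l_strictMono.monotone hji
  have hg := P.g_strictMono.monotone hji
  simp only [mem_N] at *
  omega

theorem IsMonoMatching.mono {J K : Set ℕ} {φ : ℕ → Fin r} (h : P.IsMonoMatching J φ)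
    (hKJ : K ⊆ J) : P.IsMonoMatching K φ :=
  ⟨h.1.mono hKJ, fun x hx => h.2 x (hKJ hx)⟩

variable (P) in
theorem exists_isMonoMatching_of_injOn (s : Finset ℕ) :
    ∀ f : ℕ → Fin r, InjOn f s → (∀ x ∈ (s : Set ℕ), x ∈ P.N (f x)) →
      ∃ φ, P.IsMonoMatching s φ ∧ MapsTo φ s (f '' s) := by
  classical
  induction s using Finset.induction_on_max with
  | empty => exact fun f _ _ => ⟨f, ⟨by simp [StrictMonoOn], by simp⟩, by simp⟩
  | insert a s has ih =>
    intro f hf hfN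
    rw [Finset.coe_insert] at hf hfN ⊢
    -- the top index `f x₀` is handed to the top element `a`, and `f a` to `x₀`
    obtain ⟨x₀, hx₀, hmax⟩ :=
      exists_max_image (insert a (s : Set ℕ)) f (s.finite_toSet.insert a) (insert_nonempty a _)
    have hx₀a : x₀ ≤ a := by rcases hx₀ with rfl | hx₀; exacts [le_rfl, (has x₀ hx₀).le]
    have hlt : ∀ y ∈ insert a (s : Set ℕ), y ≠ x₀ → f y < f x₀ := fun y hy hyx =>
      (hmax y hy).lt_of_ne fun h => hyx (hf hy hx₀ h)
    have hswap := mem_N_swap hx₀a (hmax a (mem_insert a _)) (hfN x₀ hx₀) (hfN a (mem_insert a _))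
    set σ := Equiv.swap x₀ a
    have hσ : MapsTo σ s (insert a (s : Set ℕ) \ {x₀}) := by
      intro y hy
      have hya : y ≠ a := (has y hy).ne
      by_cases hyx : y = x₀
      · subst hyx
        simp [σ, Equiv.swap_apply_left, hya.symm]
      · simp [σ, Equiv.swap_apply_of_ne_of_ne hyx hya, hy, hyx]
    obtain ⟨φ, hφ, hφf⟩ := ih (f ∘ σ) (hf.comp σ.injective.injOn (hσ.mono_right sdiff_subset))
      (by
        intro y hy
        by_cases hyx : y = x₀
        · subst hyx; simpa [σ] using hswap.1
        · simpa [σ, Equiv.swap_apply_of_ne_of_ne hyx (has y hy).ne] using hfN y (Or.inr hy))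
    have hφlt : ∀ y ∈ s, φ y < f x₀ := by
      intro y hy
      obtain ⟨z, hz, hzy⟩ := hφf hy
      obtain ⟨hσz, hσzx⟩ := hσ hz
      exact hzy ▸ hlt _ hσz hσzx
    refine ⟨Function.update φ a (f x₀), ⟨?_, ?_⟩, ?_⟩
    · intro y₁ h₁ y₂ h₂ h12
      rcases h₂ with rfl | h₂
      · rw [Function.update_self, Function.update_of_ne h12.ne]
        exact hφlt y₁ (h₁.resolve_left h12.ne)
      · have hy₂ := has y₂ h₂
        rw [Function.update_of_ne hy₂.ne, Function.update_of_ne (h12.trans hy₂).ne]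
        exact hφ.1 (h₁.resolve_left (h12.trans hy₂).ne) h₂ h12
    · rintro y (rfl | hy)
      · rw [Function.update_self]
        exact hswap.2
      · rw [Function.update_of_ne (has y hy).ne]
        exact hφ.2 y hy
    · rintro y (rfl | hy)
      · rw [Function.update_self]
        exact mem_image_of_mem f hx₀
      · rw [Function.update_of_ne (has y hy).ne]
        obtain ⟨z, hz, hzy⟩ := hφf hy
        exact ⟨σ z, (hσ hz).1, hzy⟩

theorem IsMonoMatching.relabel {C : Set ℕ} {b w : ℕ} {φ : ℕ → Fin r}
    (h : P.IsMonoMatching (insert w (C \ {b})) φ) (hwC : w ∉ C)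
    (hgap : ∀ c ∈ C, c ≠ b → (c < b ↔ c < w)) (hb : b ∈ P.N (φ w)) :
    P.IsMonoMatching C (φ ∘ fun c => if c = b then w else c) := by
  have hmaps : MapsTo (fun c => if c = b then w else c) C (insert w (C \ {b})) := by
    intro c hc
    by_cases hcb : c = b
    · simp [hcb]
    · simp [hcb, hc]
  have hmono : StrictMonoOn (fun c => if c = b then w else c) C := by
    intro c₁ h₁ c₂ h₂ h12
    have := hgap c₁ h₁
    have := hgap c₂ h₂
    have : c₂ ≠ w := ne_of_mem_of_not_mem h₂ hwC
    dsimp only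
    split_ifs <;> omega
  refine ⟨h.1.comp hmono hmaps, fun c hc => ?_⟩
  by_cases hcb : c = b
  · simpa [hcb] using hb
  · simpa [hcb] using h.2 c (mem_insert_of_mem w ⟨hc, hcb⟩)

theorem IsMonoMatching.ite {C : Set ℕ} {w : ℕ} {φ ψ : ℕ → Fin r}
    (hφ : P.IsMonoMatching {c ∈ C | c < w} φ) (hψ : P.IsMonoMatching {c ∈ C | w ≤ c} ψ)
    (hφψ : ∀ c ∈ C, ∀ d ∈ C, c < w → w ≤ d → φ c < ψ d) :
    P.IsMonoMatching C fun c => if c < w then φ c else ψ c := by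
  refine ⟨fun c₁ h₁ c₂ h₂ h12 => ?_, fun c hc => ?_⟩
  · by_cases hc₂ : c₂ < w
    · have hc₁ : c₁ < w := h12.trans hc₂
      simpa [hc₁, hc₂] using hφ.1 ⟨h₁, hc₁⟩ ⟨h₂, hc₂⟩ h12
    · by_cases hc₁ : c₁ < w
      · simpa [hc₁, hc₂] using hφψ c₁ h₁ c₂ h₂ hc₁ (not_lt.mp hc₂)
      · simpa [hc₁, hc₂] using hψ.1 ⟨h₁, not_lt.mp hc₁⟩ ⟨h₂, not_lt.mp hc₂⟩ h12
  · by_cases hcw : c < w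
    · simpa [hcw] using hφ.2 c ⟨hc, hcw⟩
    · simpa [hcw] using hψ.2 c ⟨hc, not_lt.mp hcw⟩

end LPP

namespace IsLPMOf

variable {m r : ℕ} {P : LPP m r} {M₀ : Matroid ℕ}

theorem finite_ground (hM : IsLPMOf P M₀) : M₀.E.Finite :=
  hM.1 ▸ finite_Icc 1 (m + r)

theorem indep_of_isMonoMatching (hM : IsLPMOf P M₀) {J : Set ℕ} {φ : ℕ → Fin r}
    (hJ : J ⊆ M₀.E) (h : P.IsMonoMatching J φ) : M₀.Indep J :=
  (hM.2 J).mpr ⟨hM.1 ▸ hJ, fun x => φ x, fun x y hxy => Subtype.ext (h.1.injOn x.2 y.2 hxy),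
    fun x => h.2 x x.2⟩

theorem exists_isMonoMatching (hM : IsLPMOf P M₀) {J : Set ℕ} (hJ : M₀.Indep J)
    (hne : J.Nonempty) : ∃ φ, P.IsMonoMatching J φ := by
  classical
  obtain ⟨hJE, f, hf, hfN⟩ := (hM.2 J).mp hJ
  obtain ⟨x₀, hx₀⟩ := hne
  set g : ℕ → Fin r := fun x => if hx : x ∈ J then f ⟨x, hx⟩ else f ⟨x₀, hx₀⟩
  have hfin : J.Finite := (finite_Icc 1 (m + r)).subset hJE
  obtain ⟨φ, hφ, -⟩ := P.exists_isMonoMatching_of_injOn hfin.toFinset g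
    (fun x hx y hy hxy => by
      simp only [Finite.coe_toFinset] at hx hy
      simpa using Subtype.ext_iff.mp (hf (by simpa [g, hx, hy] using hxy)))
    (fun x hx => by
      simp only [Finite.coe_toFinset] at hx
      simpa [g, hx] using hfN ⟨x, hx⟩)
  exact ⟨φ, by simpa using hφ⟩

theorem ncard_le (hM : IsLPMOf P M₀) {I : Set ℕ} (hI : M₀.Indep I) : I.ncard ≤ r := by
  obtain ⟨-, f, hf, -⟩ := (hM.2 I).mp hI
  simpa [Nat.card_coe_set_eq] using Nat.card_le_card_of_injective f hf

theorem indep_range_l (hM : IsLPMOf P M₀) : M₀.Indep (range P.l) := by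
  set e := Equiv.ofInjective P.l P.l_strictMono.injective
  refine (hM.2 _).mpr ⟨?_, e.symm, e.symm.injective, fun x => ?_⟩
  · rintro _ ⟨i, rfl⟩
    exact ⟨P.one_le_l i, (P.l_le_g i).trans (P.g_le i)⟩
  · have hx : P.l (e.symm x) = x := Equiv.apply_ofInjective_symm _ x
    exact ⟨hx.le, hx.symm.le.trans (P.l_le_g _)⟩

theorem exists_mem_N_of_rk_eq (hM : IsLPMOf P M₀) {U : Set ℕ} (hU : rk M₀ U = rk M₀ M₀.E)
    (j : Fin r) : ∃ x ∈ U, x ∈ P.N j := by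
  obtain ⟨I, hIU, hI, hcard⟩ := exists_indep_ncard_eq_rk (fun _ => hM.ncard_le) U
  have hr : r ≤ I.ncard := by
    have := ncard_le_rk (fun _ => hM.ncard_le) hM.indep_range_l.subset_ground hM.indep_range_l
    rwa [ncard_range_of_injective P.l_strictMono.injective, Nat.card_fin, ← hU, ← hcard] at this
  obtain ⟨-, f, hf, hfN⟩ := (hM.2 I).mp hI
  obtain ⟨x, rfl⟩ := (hf.bijective_of_nat_card_le (by simpa [Nat.card_coe_set_eq] using hr)).2 j
  exact ⟨x, hIU x.2, hfN x⟩

theorem exists_isMonoMatching_notMem_N (hM : IsLPMOf P M₀) {G C : Set ℕ} {b e : ℕ}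
    (hG : M₀.IsFlat G) (hC : M₀.IsCircuit C) (hCG : C ⊆ G) (hbC : b ∈ C) (he : e ∈ M₀.E)
    (heG : e ∉ G) (hgap : ∀ c ∈ C, c ≠ b → (c < b ↔ c < e)) :
    ∃ φ, P.IsMonoMatching (insert e (C \ {b})) φ ∧ b ∉ P.N (φ e) := by
  have hS : M₀.Indep (C \ {b}) := hC.ssubset_indep (sdiff_singleton_ssubset.mpr hbC)
  have hT : M₀.Indep (insert e (C \ {b})) := by
    refine (hS.insert_indep_iff_of_notMem fun h => heG (hCG h.1)).mpr ⟨he, fun h => heG ?_⟩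
    exact hG.closure ▸ M₀.closure_subset_closure (sdiff_subset.trans hCG) h
  obtain ⟨φ, hφ⟩ := hM.exists_isMonoMatching hT (insert_nonempty _ _)
  exact ⟨φ, hφ, fun hb => hC.dep.not_indep <| hM.indep_of_isMonoMatching hC.subset_ground <|
    hφ.relabel (fun h => heG (hCG h)) hgap hb⟩

theorem ordConnected (hM : IsLPMOf P M₀) {G : Set ℕ} (hG : NTConnFlat M₀ G) :
    G.OrdConnected := by
  refine ⟨fun p hp q hq w ⟨hpw, hwq⟩ => ?_⟩
  by_contra hwG
  replace hpw : p < w := hpw.lt_of_ne (ne_of_mem_of_not_mem hp hwG)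
  replace hwq : w < q := hwq.lt_of_ne (ne_of_mem_of_not_mem hq hwG).symm
  have hwE : w ∈ M₀.E := by
    have hpE := hG.1.subset_ground hp
    have hqE := hG.1.subset_ground hq
    rw [hM.1] at hpE hqE ⊢
    exact ⟨hpE.1.trans hpw.le, hwq.le.trans hqE.2⟩
  obtain ⟨C, hC, hCG, hpC, hqC⟩ := hG.exists_isCircuit_of_mem hp hq
  have hwC : w ∉ C := fun h => hwG (hCG h)
  obtain ⟨z, ⟨hzC, hwz⟩, hzmin⟩ : ∃ z ∈ {c ∈ C | w < c}, ∀ c ∈ {c ∈ C | w < c}, z ≤ c :=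
    ⟨_, Nat.sInf_mem ⟨q, hqC, hwq⟩, fun c hc => Nat.sInf_le hc⟩
  have hbelow : ∀ c ∈ C, w ≤ c → z ≤ c := fun c hc hwc =>
    hzmin c ⟨hc, hwc.lt_of_ne (ne_of_mem_of_not_mem hc hwC).symm⟩
  obtain ⟨φ, hφ, hzφ⟩ := hM.exists_isMonoMatching_notMem_N hG.1 hC hCG hzC hwE hwG
    (fun c hc hcz => by have := hbelow c hc; have := ne_of_mem_of_not_mem hc hwC; omega)
  -- the interval matched to `w` ends before `z`, so `C - p` can be matched above `w`
  have hgz : P.g (φ w) < z := by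
    have := hφ.2 w (mem_insert w _)
    simp only [LPP.mem_N, not_and_or, not_le] at this hzφ
    omega
  obtain ⟨ψ, hψ⟩ := hM.exists_isMonoMatching (hC.ssubset_indep (sdiff_singleton_ssubset.mpr hpC))
    ⟨q, hqC, (hpw.trans hwq).ne'⟩
  refine hC.dep.not_indep (hM.indep_of_isMonoMatching hC.subset_ground (LPP.IsMonoMatching.ite
    (hφ.mono fun c hc => mem_insert_of_mem w ⟨hc.1, (hc.2.trans hwz).ne⟩)
    (hψ.mono fun c hc => ⟨hc.1, (hpw.trans_le hc.2).ne'⟩) fun c hc d hd hcw hwd => ?_))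
  calc φ c < φ w := hφ.1 (mem_insert_of_mem w ⟨hc, (hcw.trans hwz).ne⟩) (mem_insert w _) hcw
    _ < ψ d := P.g_strictMono.lt_iff_lt.mp <|
      hgz.trans_le ((hbelow d hd hwd).trans (hψ.2 d ⟨hd, (hpw.trans_le hwd).ne'⟩).2)

theorem exists_mem_N_notMem_N (hM : IsLPMOf P M₀) {G : Set ℕ} {b e : ℕ}
    (hG : NTConnFlat M₀ G) (hb : b ∈ G) (he : e ∈ M₀.E) (heG : e ∉ G)
    (hbe : ∀ c ∈ G, b ∈ uIcc e c) : ∃ j, e ∈ P.N j ∧ b ∉ P.N j := by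
  obtain ⟨C, hC, hCG, hbC, -⟩ := hG.exists_isCircuit_of_mem hb hb
  obtain ⟨φ, hφ, hbφ⟩ := hM.exists_isMonoMatching_notMem_N hG.1 hC hCG hbC he heG
    fun c hc hcb => by have := hbe c (hCG hc); rw [mem_uIcc] at this; omega
  exact ⟨φ e, hφ.2 e (mem_insert e _), hbφ⟩

theorem false_of_ntConnFlat {X X' : Set ℕ} (hM : IsLPMOf P M₀) (hX : NTConnFlat M₀ X)
    (hX' : NTConnFlat M₀ X') (h1 : (X ∩ X').Nonempty) (h2 : rk M₀ (X ∪ X') = rk M₀ M₀.E)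
    (h3 : X ∪ X' ⊂ M₀.E) : False := by
  obtain ⟨e, heE, heU⟩ := exists_of_ssubset h3
  obtain ⟨c, hcU, hc⟩ :=
    ((hM.ordConnected hX).union_of_inter_nonempty (hM.ordConnected hX') h1).exists_forall_mem_uIcc
      (hM.finite_ground.subset h3.subset) (h1.mono (inter_subset_left.trans subset_union_left)) heU
  obtain ⟨G, hG, hGU, hcG⟩ : ∃ G, NTConnFlat M₀ G ∧ G ⊆ X ∪ X' ∧ c ∈ G := by
    rcases hcU with hcX | hcX'
    exacts [⟨X, hX, subset_union_left, hcX⟩, ⟨X', hX', subset_union_right, hcX'⟩]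
  obtain ⟨j, hej, hcj⟩ := hM.exists_mem_N_notMem_N hG hcG heE (fun h => heU (hGU h))
    fun u hu => hc u (hGU hu)
  obtain ⟨x, hxU, hxj⟩ := hM.exists_mem_N_of_rk_eq h2 j
  exact hcj (ordConnected_Icc.uIcc_subset hej hxj (hc x hxU))

end IsLPMOf

end LPM

open LPM in
theorem stmt16_general {α : Type*} (M : Matroid α)
    (X X' : Set α) (hX : NTConnFlat M X) (hX' : NTConnFlat M X')
    (h1 : (X ∩ X').Nonempty)
    (h2 : rk M (X ∪ X') = rk M M.E)
    (h3 : X ∪ X' ⊂ M.E) :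
    ¬ IsLPMatroid M := by
  rintro ⟨m, r, P, M₀, hP, hiso⟩
  obtain ⟨f, hf, rfl⟩ := hiso.exists_eq_map
  have hU : X ∪ X' ⊆ M.E := h3.subset
  refine hP.false_of_ntConnFlat (hX.map hf) (hX'.map hf)
    ((h1.image f).mono (image_inter_subset f X X')) ?_ ?_
  · rw [← image_union, Matroid.map_ground, rk_map_image hf hU, rk_map_image hf subset_rfl, h2]
  · rw [← image_union, Matroid.map_ground]
    exact (hf.image_ssubset_image_iff hU subset_rfl).mpr h3

open LPM in
/-- A finite matroid having two nontrivial connected flats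
`X`, `X'` with `X ∩ X' ≠ ∅`, `r(X ∪ X') = r(M)`, and `X ∪ X' ⊊ E(M)` is not a
lattice path matroid. -/
theorem stmt16 {α : Type*} (M : Matroid α) (hfin : M.E.Finite)
    (X X' : Set α) (hX : NTConnFlat M X) (hX' : NTConnFlat M X')
    (h1 : (X ∩ X').Nonempty)
    (h2 : rk M (X ∪ X') = rk M M.E)
    (h3 : X ∪ X' ⊂ M.E) :
    ¬ IsLPMatroid M :=
  stmt16_general M X X' hX hX' h1 h2 h3
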